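/- For m = 0, 1, 2, 3 let L_m := (1/2)P(φ_{m+1}) + P(φ_{m+2}) + (1/2)P(φ_{m+3}) and B_m := (1/2)P(φ_m) + P(φ_{m+1}) + (3/2)P(φ_{m+2}) + P(φ_{m+3}) (indices mod 4). The intercept-and-resend POVM with elements W_m†W_m = P(φ_m)/2 achieves the minimum bit error rate 1/3: Σ_{m=0}^{3} tr(L_m · P(φ_m)/2) = 1, Σ_{m=0}^{3} tr(B_m · P(φ_m)/2) = 3, so their ratio equals 1/3. -/

import Mathlib

open Matrix Real
open scoped ComplexOrder

noncomputable section

/-- Standard basis vector `e₀` of `ℂ²`. -/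
def e0 : Fin 2 → ℂ := ![1, 0]
/-- Standard basis vector `e₁` of `ℂ²`. -/
def e1 : Fin 2 → ℂ := ![0, 1]

/-- `P(v) = v v†`, the rank-one matrix associated with `v ∈ ℂ²`. -/
def P (v : Fin 2 → ℂ) : Matrix (Fin 2) (Fin 2) ℂ := vecMulVec v (star v)

/-- The rotation `R = cos(π/4)·I + sin(π/4)·(e₁e₀† - e₀e₁†)`. -/
def Rrot : Matrix (Fin 2) (Fin 2) ℂ :=
  (Real.cos (π / 4) : ℂ) • 1 +
    (Real.sin (π / 4) : ℂ) • (vecMulVec e1 (star e0) - vecMulVec e0 (star e1))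

/-- The SARG04 states `φ_m = R^{-m} φ₀` with `φ₀ = cos(π/8) e₀ + sin(π/8) e₁`,
indices effectively taken modulo 4. -/
def φ (m : ℤ) : Fin 2 → ℂ :=
  (Rrot ^ (-m)).mulVec ((Real.cos (π / 8) : ℂ) • e0 + (Real.sin (π / 8) : ℂ) • e1)
/-- `L_m` for the single-photon SARG04 intercept-and-resend analysis (indices mod 4). -/
def Lm (m : ℤ) : Matrix (Fin 2) (Fin 2) ℂ :=
  ((1 : ℂ) / 2) • P (φ (m + 1)) + P (φ (m + 2)) + ((1 : ℂ) / 2) • P (φ (m + 3))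

/-- `B_m` for the single-photon SARG04 intercept-and-resend analysis (indices mod 4). -/
def Bm (m : ℤ) : Matrix (Fin 2) (Fin 2) ℂ :=
  ((1 : ℂ) / 2) • P (φ m) + P (φ (m + 1)) + ((3 : ℂ) / 2) • P (φ (m + 2)) + P (φ (m + 3))

/-! The rotation `R` maps `(cos θ, sin θ)` to `(cos (θ + π/4), sin (θ + π/4))`, so `φ m` is the real
unit vector at angle `π/8 - m π/4`. Hence `tr (P(φ a) P(φ b)) = |⟨φ a, φ b⟩|² = cos² ((a - b) π/4)`,
which is `1, 1/2, 0, 1/2` for `a - b = 0, 1, 2, 3`. Every summand is then `1/4` for `L` and `3/4`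
for `B`, independently of `m`. -/

theorem Matrix.zpow_mulVec_of_forall_mulVec_eq {n R G : Type*} [Fintype n] [DecidableEq n]
    [CommRing R] [AddCommGroup G] {A : Matrix n n R} (hA : IsUnit A.det) {f : G → n → R} {α : G}
    (h : ∀ θ, A *ᵥ f θ = f (θ + α)) (k : ℤ) (θ : G) : (A ^ k) *ᵥ f θ = f (θ + k • α) := by
  have h_inv (θ : G) : A⁻¹ *ᵥ f θ = f (θ - α) := by
    conv_lhs => rw [← sub_add_cancel θ α, ← h]
    rw [mulVec_mulVec, nonsing_inv_mul _ hA, one_mulVec]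
  induction k using Int.induction_on generalizing θ with
  | zero => simp
  | succ k ih =>
    rw [zpow_add_one hA, ← mulVec_mulVec, h, ih, add_zsmul, one_zsmul]
    congr 1; abel
  | pred k ih =>
    rw [zpow_sub_one hA, ← mulVec_mulVec, h_inv, ih, sub_zsmul, one_zsmul]
    congr 1; abel

def angleVec (θ : ℝ) : Fin 2 → ℂ := ![(Real.cos θ : ℂ), (Real.sin θ : ℂ)]

theorem Rrot_eq : Rrot = !![(Real.cos (π / 4) : ℂ), -(Real.sin (π / 4) : ℂ);
    (Real.sin (π / 4) : ℂ), (Real.cos (π / 4) : ℂ)] := by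
  ext i j
  fin_cases i <;> fin_cases j <;>
    simp only [Rrot, Matrix.add_apply, Matrix.smul_apply, Matrix.sub_apply, vecMulVec_apply] <;>
    simp [e0, e1]

theorem det_Rrot : Rrot.det = 1 := by
  rw [Rrot_eq, det_fin_two_of]
  exact_mod_cast by linear_combination Real.cos_sq_add_sin_sq (π / 4)

theorem Rrot_mulVec_angleVec (θ : ℝ) : Rrot *ᵥ angleVec θ = angleVec (θ + π / 4) := by
  ext i
  fin_cases i <;> simp [Rrot_eq, angleVec, Real.cos_add, Real.sin_add] <;> ring

theorem φ_eq_angleVec (m : ℤ) : φ m = angleVec (π / 8 - m * (π / 4)) := by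
  have hφ₀ : (Real.cos (π / 8) : ℂ) • e0 + (Real.sin (π / 8) : ℂ) • e1 = angleVec (π / 8) := by
    ext i; fin_cases i <;> simp [angleVec, e0, e1]
  rw [φ, hφ₀, zpow_mulVec_of_forall_mulVec_eq (by simp [det_Rrot]) Rrot_mulVec_angleVec,
    zsmul_eq_mul, sub_eq_add_neg, Int.cast_neg, neg_mul]

theorem trace_P_mul_P (u v : Fin 2 → ℂ) :
    (P u * P v).trace = (star u ⬝ᵥ v) * (star v ⬝ᵥ u) := by
  rw [P, P, vecMulVec_mul_vecMulVec, trace_vecMulVec, dotProduct_smul, smul_eq_mul,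
    dotProduct_comm u]

theorem star_angleVec_dotProduct_angleVec (a b : ℝ) :
    star (angleVec a) ⬝ᵥ angleVec b = (Real.cos (a - b) : ℂ) := by
  simp only [angleVec, dotProduct, Fin.sum_univ_two, Pi.star_apply, cons_val_zero, cons_val_one,
    RCLike.star_def, Complex.conj_ofReal]
  push_cast [Real.cos_sub]
  ring

theorem trace_P_φ_mul_P_φ (a b : ℤ) :
    (P (φ a) * P (φ b)).trace = (Real.cos ((a - b) * (π / 4)) : ℂ) ^ 2 := by
  rw [trace_P_mul_P, φ_eq_angleVec, φ_eq_angleVec, star_angleVec_dotProduct_angleVec,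
    star_angleVec_dotProduct_angleVec, ← Real.cos_neg (_ - _), sq]
  congr 3 <;> ring

theorem trace_P_φ_add_mul_P_φ (m k : ℤ) :
    (P (φ (m + k)) * P (φ m)).trace = (Real.cos (k * (π / 4)) : ℂ) ^ 2 := by
  rw [trace_P_φ_mul_P_φ, Int.cast_add, add_sub_cancel_left]

theorem trace_P_φ_mul_self (m : ℤ) : (P (φ m) * P (φ m)).trace = 1 := by
  simpa using trace_P_φ_add_mul_P_φ m 0

theorem Real.cos_pi_div_four_sq : Real.cos (π / 4) ^ 2 = 1 / 2 := by
  rw [Real.cos_pi_div_four, div_pow, Real.sq_sqrt zero_le_two]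
  norm_num

theorem trace_P_φ_add_one_mul (m : ℤ) : (P (φ (m + 1)) * P (φ m)).trace = 1 / 2 := by
  rw [trace_P_φ_add_mul_P_φ, Int.cast_one, one_mul, ← Complex.ofReal_pow, Real.cos_pi_div_four_sq]
  norm_num

theorem trace_P_φ_add_two_mul (m : ℤ) : (P (φ (m + 2)) * P (φ m)).trace = 0 := by
  rw [trace_P_φ_add_mul_P_φ, Int.cast_two, show (2 : ℝ) * (π / 4) = π / 2 by ring,
    Real.cos_pi_div_two]
  simp

theorem trace_P_φ_add_three_mul (m : ℤ) : (P (φ (m + 3)) * P (φ m)).trace = 1 / 2 := by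
  rw [trace_P_φ_add_mul_P_φ, show ((3 : ℤ) : ℝ) * (π / 4) = π - π / 4 by push_cast; ring,
    Real.cos_pi_sub, Complex.ofReal_neg, neg_sq, ← Complex.ofReal_pow, Real.cos_pi_div_four_sq]
  norm_num

theorem trace_Lm_mul_P_φ (m : ℤ) : (Lm m * P (φ m)).trace = 1 / 2 := by
  simp only [Lm, add_mul, smul_mul_assoc, trace_add, trace_smul, trace_P_φ_add_one_mul,
    trace_P_φ_add_two_mul, trace_P_φ_add_three_mul, smul_eq_mul]
  norm_num

theorem trace_Bm_mul_P_φ (m : ℤ) : (Bm m * P (φ m)).trace = 3 / 2 := by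
  simp only [Bm, add_mul, smul_mul_assoc, trace_add, trace_smul, trace_P_φ_mul_self,
    trace_P_φ_add_one_mul, trace_P_φ_add_two_mul, trace_P_φ_add_three_mul, smul_eq_mul]
  norm_num

/-- The simple intercept-and-resend POVM with elements `P(φ_m)/2` achieves the minimum
bit error rate `1/3`: the error weight is `1`, the total weight is `3`, and their
ratio is `1/3`. -/
theorem sarg04_simple_intercept_resend_achieves_third :
    (∑ m : Fin 4, (Lm (m : ℤ) * (((1 : ℂ) / 2) • P (φ (m : ℤ)))).trace = 1) ∧
    (∑ m : Fin 4, (Bm (m : ℤ) * (((1 : ℂ) / 2) • P (φ (m : ℤ)))).trace = 3) ∧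
    (∑ m : Fin 4, (Lm (m : ℤ) * (((1 : ℂ) / 2) • P (φ (m : ℤ)))).trace)
        / (∑ m : Fin 4, (Bm (m : ℤ) * (((1 : ℂ) / 2) • P (φ (m : ℤ)))).trace)
      = 1 / 3 := by
  have hL : (∑ m : Fin 4, (Lm (m : ℤ) * (((1 : ℂ) / 2) • P (φ (m : ℤ)))).trace = 1) := by
    simp only [Matrix.mul_smul, trace_smul, trace_Lm_mul_P_φ]
    norm_num
  have hB : (∑ m : Fin 4, (Bm (m : ℤ) * (((1 : ℂ) / 2) • P (φ (m : ℤ)))).trace = 3) := by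
    simp only [Matrix.mul_smul, trace_smul, trace_Bm_mul_P_φ]
    norm_num
  exact ⟨hL, hB, by rw [hL, hB]⟩

end
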